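/- arXiv:1410.0520 — 9 statements merged into one kernel-verified Lean document; each statement's English description precedes it below -/
import Mathlib

section
/- Let g : [0,1] → ℝ be continuous with g(0) = 0 and x ≥ 0. Define φ(t) = max{0, max_{0 ≤ s ≤ t} -(x + g(s))} and f(t) = x + φ(t) + g(t). Then φ is nondecreasing, continuous, φ(0) = 0, and f(t) ≥ 0 for all t ∈ [0,1]. -/
open Set

section RunningSup

variable {α β : Type*}

theorem monotoneOn_sSup_image_Icc [Preorder α] [ConditionallyCompleteLattice β] {f : α → β}
    {a b : α} (hf : BddAbove (f '' Icc a b)) :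
    MonotoneOn (fun t => sSup (f '' Icc a t)) (Icc a b) := fun _ hs _ ht hst =>
  csSup_le_csSup (hf.mono (image_mono (Icc_subset_Icc_right ht.2)))
    ((nonempty_Icc.2 hs.1).image f) (image_mono (Icc_subset_Icc_right hst))

variable [ConditionallyCompleteLinearOrder α] [TopologicalSpace α] [OrderTopology α]
  [ConditionallyCompleteLinearOrder β] [TopologicalSpace β] [OrderTopology β]

theorem ContinuousOn.continuousOn_sSup_image_Icc {f : α → β} {a b : α}
    (hf : ContinuousOn f (Icc a b)) :
    ContinuousOn (fun t => sSup (f '' Icc a t)) (Icc a b) := by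
  rcases le_or_gt a b with hab | hba
  swap
  · simp [Icc_eq_empty hba.not_ge]
  -- `f '' Icc a t` is the image of the fixed compact `Icc a b` under `s ↦ f (min s t)`.
  set F : α → α → β := fun t s => f (projIcc a b hab (min s t))
  have hF : Continuous ↿F :=
    hf.comp_continuous (continuous_subtype_val.comp
      (continuous_projIcc.comp (continuous_snd.min continuous_fst))) fun p => (projIcc a b hab _).2
  have hF_eq : ∀ t ∈ Icc a b, F t '' Icc a b = f '' Icc a t := by
    intro t ht
    ext y
    constructor
    · rintro ⟨s, hs, rfl⟩
      have hst : min s t ∈ Icc a b := ⟨le_min hs.1 ht.1, (min_le_left _ _).trans hs.2⟩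
      exact ⟨min s t, ⟨hst.1, min_le_right _ _⟩, by simp [F, projIcc_of_mem hab hst]⟩
    · rintro ⟨s, hs, rfl⟩
      have hsb : s ∈ Icc a b := ⟨hs.1, hs.2.trans ht.2⟩
      exact ⟨s, hsb, by simp [F, min_eq_left hs.2, projIcc_of_mem hab hsb]⟩
  refine (isCompact_Icc (a := a) (b := b)).continuous_sSup hF |>.continuousOn.congr fun t ht => ?_
  simp only [hF_eq t ht]

end RunningSup

/-- The explicit Skorohod map: for continuous `g` on `[0,1]` with `g 0 = 0` and `x ≥ 0`,
the regulator `φ t = max {0, max_{0 ≤ s ≤ t} -(x + g s)}` is nondecreasing, continuous,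
starts at `0`, and the reflected path `f = x + φ + g` is nonnegative on `[0,1]`. -/
theorem skorohod_map_properties (g : ℝ → ℝ) (x : ℝ)
    (hg : ContinuousOn g (Icc 0 1)) (hg0 : g 0 = 0) (hx : 0 ≤ x)
    (φ f : ℝ → ℝ)
    (hφ : ∀ t, φ t = max 0 (sSup ((fun s => -(x + g s)) '' Icc 0 t)))
    (hf : ∀ t, f t = x + φ t + g t) :
    MonotoneOn φ (Icc 0 1) ∧ ContinuousOn φ (Icc 0 1) ∧ φ 0 = 0 ∧
      ∀ t ∈ Icc (0 : ℝ) 1, 0 ≤ f t := by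
  have hk : ContinuousOn (fun s => -(x + g s)) (Icc 0 1) := (continuousOn_const.add hg).neg
  obtain rfl : φ = fun t => max 0 (sSup ((fun s => -(x + g s)) '' Icc 0 t)) := funext hφ
  refine ⟨?_, continuousOn_const.sup hk.continuousOn_sSup_image_Icc, ?_, fun t ht => ?_⟩
  · exact monotoneOn_const.max (monotoneOn_sSup_image_Icc (isCompact_Icc.bddAbove_image hk))
  · simp [hg0, hx]
  · have hle : -(x + g t) ≤ sSup ((fun s => -(x + g s)) '' Icc 0 t) :=
      (hk.mono (Icc_subset_Icc_right ht.2)).le_sSup_image_Icc (right_mem_Icc.2 ht.1)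
    rw [hf]
    linarith [le_max_right 0 (sSup ((fun s => -(x + g s)) '' Icc 0 t))]
end

section
/- Let g : [0,1] → ℝ be continuous with g(0) = 0 and x ≥ 0. Define φ(t) = max{0, max_{0 ≤ s ≤ t} -(x + g(s))} and f(t) = x + φ(t) + g(t). If f(t₀) > 0 for all t₀ in an interval (a,b) ⊆ [0,1], then φ is constant on (a,b). -/
/-! The running maximum of a continuous function is attained, so if `φ` grows between `s` and `t`
the new maximum `φ t = -(x + g u)` is attained at some `u ∈ (s, t]`. There
`f u = x + φ u + g u ≤ x + φ t + g u = 0`, while `f ≥ 0` everywhere, so `f` touches zero in `(s, t]`. -/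

open Set

section RunningSup

variable {h : ℝ → ℝ} {s t u : ℝ}

lemma le_sSup_image_Icc (hh : ContinuousOn h (Icc 0 t)) (hu : u ∈ Icc 0 t) :
    h u ≤ sSup (h '' Icc 0 t) :=
  le_csSup (isCompact_Icc.bddAbove_image hh) (mem_image_of_mem h hu)

lemma sSup_image_Icc_mono (hh : ContinuousOn h (Icc 0 t)) (hs : 0 ≤ s) (hst : s ≤ t) :
    sSup (h '' Icc 0 s) ≤ sSup (h '' Icc 0 t) :=
  csSup_le_csSup (isCompact_Icc.bddAbove_image hh) ((nonempty_Icc.2 hs).image h)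
    (image_mono (Icc_subset_Icc le_rfl hst))

lemma exists_mem_Ioc_eq_sSup_image_Icc (hh : ContinuousOn h (Icc 0 t)) (ht : 0 ≤ t)
    (hst : s ≤ t) (hlt : sSup (h '' Icc 0 s) < sSup (h '' Icc 0 t)) :
    ∃ u ∈ Ioc s t, h u = sSup (h '' Icc 0 t) := by
  obtain ⟨u, hu, hmax⟩ := isCompact_Icc.exists_isMaxOn (nonempty_Icc.2 ht) hh
  have hsup : sSup (h '' Icc 0 t) = h u :=
    IsGreatest.csSup_eq ⟨mem_image_of_mem h hu, forall_mem_image.2 fun _ hv => hmax hv⟩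
  refine ⟨u, ⟨lt_of_not_ge fun hus => ?_, hu.2⟩, hsup.symm⟩
  have := le_sSup_image_Icc (hh.mono (Icc_subset_Icc le_rfl hst)) ⟨hu.1, hus⟩
  linarith

end RunningSup

section Skorohod

variable {g φ f : ℝ → ℝ} {x s t u : ℝ}

lemma skorohod_regulator_mono (hg : ContinuousOn g (Icc 0 t))
    (hφ : ∀ t, φ t = max 0 (sSup ((fun s => -(x + g s)) '' Icc 0 t)))
    (hs : 0 ≤ s) (hst : s ≤ t) : φ s ≤ φ t := by
  rw [hφ s, hφ t]
  exact max_le_max le_rfl (sSup_image_Icc_mono (continuousOn_const.add hg).neg hs hst)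

lemma skorohod_reflected_nonneg (hg : ContinuousOn g (Icc 0 u))
    (hφ : ∀ t, φ t = max 0 (sSup ((fun s => -(x + g s)) '' Icc 0 t)))
    (hf : ∀ t, f t = x + φ t + g t) (hu : 0 ≤ u) : 0 ≤ f u := by
  have := le_sSup_image_Icc (h := fun s => -(x + g s)) (continuousOn_const.add hg).neg ⟨hu, le_rfl⟩
  rw [hf u, hφ u]
  linarith [le_max_right 0 (sSup ((fun s => -(x + g s)) '' Icc 0 u))]

lemma skorohod_exists_zero_of_regulator_lt (hg : ContinuousOn g (Icc 0 t))
    (hφ : ∀ t, φ t = max 0 (sSup ((fun s => -(x + g s)) '' Icc 0 t)))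
    (hf : ∀ t, f t = x + φ t + g t) (hs : 0 ≤ s) (hst : s ≤ t) (hlt : φ s < φ t) :
    ∃ u ∈ Ioc s t, f u = 0 := by
  set M : ℝ → ℝ := fun t => sSup ((fun s => -(x + g s)) '' Icc 0 t)
  have hφt : φ t = M t := by
    have hpos : 0 < max 0 (M t) := (hφ t ▸ hlt).trans_le' (hφ s ▸ le_max_left 0 (M s))
    rw [hφ t, max_eq_right ((lt_max_iff.1 hpos).resolve_left (lt_irrefl 0)).le]
  have hM_lt : M s < M t := lt_of_not_ge fun hle => hlt.not_ge (by
    rw [hφ s, hφ t]; exact max_le_max le_rfl hle)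
  obtain ⟨u, hu, hgu⟩ : ∃ u ∈ Ioc s t, -(x + g u) = M t :=
    exists_mem_Ioc_eq_sSup_image_Icc (continuousOn_const.add hg).neg (hs.trans hst) hst hM_lt
  have hu0 : 0 ≤ u := hs.trans hu.1.le
  have hφu : φ u ≤ φ t := skorohod_regulator_mono hg hφ hu0 hu.2
  have hfu : 0 ≤ f u := skorohod_reflected_nonneg (hg.mono (Icc_subset_Icc le_rfl hu.2)) hφ hf hu0
  refine ⟨u, hu, le_antisymm ?_ hfu⟩
  rw [hf u]
  linarith

end Skorohod

theorem skorohod_regulator_constant_general (g : ℝ → ℝ) (x : ℝ)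
    (hg : ContinuousOn g (Icc 0 1))
    (φ f : ℝ → ℝ)
    (hφ : ∀ t, φ t = max 0 (sSup ((fun s => -(x + g s)) '' Icc 0 t)))
    (hf : ∀ t, f t = x + φ t + g t)
    (a b : ℝ) (hab : Ioo a b ⊆ Icc 0 1)
    (hpos : ∀ t ∈ Ioo a b, 0 < f t) :
    ∀ s ∈ Ioo a b, ∀ t ∈ Ioo a b, φ s = φ t := by
  intro s hs t ht
  wlog hst : s ≤ t generalizing s t
  · exact (this t ht s hs (le_of_not_ge hst)).symm
  have hgt : ContinuousOn g (Icc 0 t) := hg.mono (Icc_subset_Icc le_rfl (hab ht).2)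
  refine (skorohod_regulator_mono hgt hφ (hab hs).1 hst).eq_of_not_lt fun hlt => ?_
  obtain ⟨u, hu, hfu⟩ := skorohod_exists_zero_of_regulator_lt hgt hφ hf (hab hs).1 hst hlt
  exact (hpos u ⟨hs.1.trans hu.1, hu.2.trans_lt ht.2⟩).ne' hfu

/-- The Skorohod regulator `φ` is constant on any open interval `(a,b) ⊆ [0,1]`
on which the reflected path `f = x + φ + g` is strictly positive. -/
theorem skorohod_regulator_constant (g : ℝ → ℝ) (x : ℝ)
    (hg : ContinuousOn g (Icc 0 1)) (hg0 : g 0 = 0) (hx : 0 ≤ x)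
    (φ f : ℝ → ℝ)
    (hφ : ∀ t, φ t = max 0 (sSup ((fun s => -(x + g s)) '' Icc 0 t)))
    (hf : ∀ t, f t = x + φ t + g t)
    (a b : ℝ) (hab : Ioo a b ⊆ Icc 0 1)
    (hpos : ∀ t ∈ Ioo a b, 0 < f t) :
    ∀ s ∈ Ioo a b, ∀ t ∈ Ioo a b, φ s = φ t :=
  skorohod_regulator_constant_general g x hg φ f hφ hf a b hab hpos
end

section
/- Uniqueness of the Skorohod problem: Let g : [0,1] → ℝ be continuous with g(0)=0 and x ≥ 0. Suppose (f₁, φ₁) and (f₂, φ₂) both satisfy: φᵢ is continuous, nondecreasing, φᵢ(0)=0, fᵢ(t) = x + φᵢ(t) + g(t) ≥ 0 for all t, and φᵢ increases only at times t where fᵢ(t) = 0 (i.e., the Stieltjes measure dφᵢ is supported on {t : fᵢ(t)=0}). Then f₁ = f₂ and φ₁ = φ₂. -/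
/-!
Two solutions driven by the same `g` have `f₁ - f₂ = φ₁ - φ₂`. Wherever `φ₁` exceeds `φ₂`,
`f₁ > f₂ ≥ 0`, so `φ₁` is flat there, while `φ₂` can only increase. Hence `φ₁ - φ₂`, which starts
at `0`, can never become positive; by symmetry `φ₁ = φ₂`, and then `f₁ = f₂`.
-/

open Set

lemma le_on_Icc_of_const_where_gt {a b : ℝ} {φ ψ : ℝ → ℝ}
    (hφ : ContinuousOn φ (Icc a b)) (hψ : ContinuousOn ψ (Icc a b))
    (hψm : MonotoneOn ψ (Icc a b)) (ha : φ a ≤ ψ a)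
    (hconst : ∀ s ∈ Icc a b, ∀ t ∈ Icc a b, s ≤ t →
      (∀ u ∈ Icc s t, ψ u < φ u) → φ s = φ t) :
    ∀ t ∈ Icc a b, φ t ≤ ψ t := by
  intro t ht
  by_contra! hlt
  have hsub : Icc a t ⊆ Icc a b := Icc_subset_Icc_right ht.2
  -- `s` is the last time up to `t` at which `φ ≤ ψ`.
  set S := {u ∈ Icc a t | φ u ≤ ψ u}
  have hSbdd : BddAbove S := bddAbove_Icc.mono fun _ hu => hu.1
  have hsS : sSup S ∈ S :=
    (isClosed_Icc.isClosed_le (hφ.mono hsub) (hψ.mono hsub)).csSup_mem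
      ⟨a, ⟨left_mem_Icc.2 ht.1, ha⟩⟩ hSbdd
  set s := sSup S
  have hs : s ∈ Icc a b := hsub hsS.1
  have hst : s < t := lt_of_le_of_ne hsS.1.2 fun h => (h ▸ hsS.2).not_gt hlt
  have hgt : ∀ u ∈ Ioc s t, ψ u < φ u := fun u hu =>
    not_le.1 fun hle => hu.1.not_ge (le_csSup hSbdd ⟨⟨hsS.1.1.trans hu.1.le, hu.2⟩, hle⟩)
  have hflat : EqOn φ (fun _ => φ t) (Ioc s t) := fun u hu =>
    hconst u ⟨hs.1.trans hu.1.le, hu.2.trans ht.2⟩ t ht hu.2 fun v hv =>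
      hgt v ⟨hu.1.trans_le hv.1, hv.2⟩
  have hφst : φ s = φ t :=
    hflat.of_subset_closure (hφ.mono (Icc_subset_Icc hs.1 ht.2)) continuousOn_const
      Ioc_subset_Icc_self (closure_Ioc hst.ne).ge (left_mem_Icc.2 hst.le)
  linarith [hsS.2, hψm hs ht hst.le]

lemma skorohod_regulator_le {x : ℝ} {g f₁ φ₁ f₂ φ₂ : ℝ → ℝ}
    (hφ₁c : ContinuousOn φ₁ (Icc 0 1)) (hφ₂c : ContinuousOn φ₂ (Icc 0 1))
    (hφ₂m : MonotoneOn φ₂ (Icc 0 1)) (hφ0 : φ₁ 0 ≤ φ₂ 0)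
    (hf₁ : ∀ t ∈ Icc (0 : ℝ) 1, f₁ t = x + φ₁ t + g t)
    (hf₂ : ∀ t ∈ Icc (0 : ℝ) 1, f₂ t = x + φ₂ t + g t ∧ 0 ≤ f₂ t)
    (hsupp₁ : ∀ s ∈ Icc (0 : ℝ) 1, ∀ t ∈ Icc (0 : ℝ) 1, s ≤ t →
      (∀ u ∈ Icc s t, 0 < f₁ u) → φ₁ s = φ₁ t) :
    ∀ t ∈ Icc (0 : ℝ) 1, φ₁ t ≤ φ₂ t := by
  refine le_on_Icc_of_const_where_gt hφ₁c hφ₂c hφ₂m hφ0 fun s hs t ht hst hgt => ?_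
  refine hsupp₁ s hs t ht hst fun u hu => ?_
  have hu01 : u ∈ Icc (0 : ℝ) 1 := ⟨hs.1.trans hu.1, hu.2.trans ht.2⟩
  linarith [hf₁ u hu01, hf₂ u hu01, hgt u hu]

theorem skorohod_uniqueness_general (g : ℝ → ℝ) (x : ℝ)
    (f₁ φ₁ f₂ φ₂ : ℝ → ℝ)
    (hφ₁c : ContinuousOn φ₁ (Icc 0 1)) (hφ₁m : MonotoneOn φ₁ (Icc 0 1))
    (hφ₁0 : φ₁ 0 = 0)
    (hφ₂c : ContinuousOn φ₂ (Icc 0 1)) (hφ₂m : MonotoneOn φ₂ (Icc 0 1))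
    (hφ₂0 : φ₂ 0 = 0)
    (hf₁ : ∀ t ∈ Icc (0 : ℝ) 1, f₁ t = x + φ₁ t + g t ∧ 0 ≤ f₁ t)
    (hf₂ : ∀ t ∈ Icc (0 : ℝ) 1, f₂ t = x + φ₂ t + g t ∧ 0 ≤ f₂ t)
    (hsupp₁ : ∀ s ∈ Icc (0 : ℝ) 1, ∀ t ∈ Icc (0 : ℝ) 1, s ≤ t →
      (∀ u ∈ Icc s t, 0 < f₁ u) → φ₁ s = φ₁ t)
    (hsupp₂ : ∀ s ∈ Icc (0 : ℝ) 1, ∀ t ∈ Icc (0 : ℝ) 1, s ≤ t →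
      (∀ u ∈ Icc s t, 0 < f₂ u) → φ₂ s = φ₂ t) :
    ∀ t ∈ Icc (0 : ℝ) 1, f₁ t = f₂ t ∧ φ₁ t = φ₂ t := by
  have h₁₂ := skorohod_regulator_le hφ₁c hφ₂c hφ₂m (hφ₁0.trans hφ₂0.symm).le
    (fun t ht => (hf₁ t ht).1) hf₂ hsupp₁
  have h₂₁ := skorohod_regulator_le hφ₂c hφ₁c hφ₁m (hφ₂0.trans hφ₁0.symm).le
    (fun t ht => (hf₂ t ht).1) hf₁ hsupp₂
  intro t ht
  have hφ : φ₁ t = φ₂ t := le_antisymm (h₁₂ t ht) (h₂₁ t ht)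
  exact ⟨by rw [(hf₁ t ht).1, (hf₂ t ht).1, hφ], hφ⟩

/-- Uniqueness for the Skorohod problem: if `(f₁, φ₁)` and `(f₂, φ₂)` are two solutions
with continuous nondecreasing regulators starting at `0`, nonnegative reflected paths
`fᵢ = x + φᵢ + g`, and regulators that are constant on every interval where `fᵢ > 0`
(i.e. `dφᵢ` is supported on `{fᵢ = 0}`), then the two solutions coincide on `[0,1]`. -/
theorem skorohod_uniqueness (g : ℝ → ℝ) (x : ℝ)
    (hg : ContinuousOn g (Icc 0 1)) (hg0 : g 0 = 0) (hx : 0 ≤ x)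
    (f₁ φ₁ f₂ φ₂ : ℝ → ℝ)
    (hφ₁c : ContinuousOn φ₁ (Icc 0 1)) (hφ₁m : MonotoneOn φ₁ (Icc 0 1))
    (hφ₁0 : φ₁ 0 = 0)
    (hφ₂c : ContinuousOn φ₂ (Icc 0 1)) (hφ₂m : MonotoneOn φ₂ (Icc 0 1))
    (hφ₂0 : φ₂ 0 = 0)
    (hf₁ : ∀ t ∈ Icc (0 : ℝ) 1, f₁ t = x + φ₁ t + g t ∧ 0 ≤ f₁ t)
    (hf₂ : ∀ t ∈ Icc (0 : ℝ) 1, f₂ t = x + φ₂ t + g t ∧ 0 ≤ f₂ t)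
    (hsupp₁ : ∀ s ∈ Icc (0 : ℝ) 1, ∀ t ∈ Icc (0 : ℝ) 1, s ≤ t →
      (∀ u ∈ Icc s t, 0 < f₁ u) → φ₁ s = φ₁ t)
    (hsupp₂ : ∀ s ∈ Icc (0 : ℝ) 1, ∀ t ∈ Icc (0 : ℝ) 1, s ≤ t →
      (∀ u ∈ Icc s t, 0 < f₂ u) → φ₂ s = φ₂ t) :
    ∀ t ∈ Icc (0 : ℝ) 1, f₁ t = f₂ t ∧ φ₁ t = φ₂ t :=
  skorohod_uniqueness_general g x f₁ φ₁ f₂ φ₂ hφ₁c hφ₁m hφ₁0 hφ₂c hφ₂m hφ₂0 hf₁ hf₂ hsupp₁ hsupp₂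
end

section
/- Lipschitz continuity of the Skorohod map: for continuous g₁, g₂ : [0,1] → ℝ with g₁(0) = g₂(0) = 0 and x ≥ 0, define fᵢ(t) = x + φᵢ(t) + gᵢ(t) where φᵢ(t) = max{0, max_{0 ≤ s ≤ t} -(x + gᵢ(s))}. Then sup_{t∈[0,1]} |f₁(t) - f₂(t)| ≤ 2 · sup_{t∈[0,1]} |g₁(t) - g₂(t)|. -/
/-!
Taking a supremum over a common index set is 1-Lipschitz for the uniform distance, and so is
truncation `a ↦ max 0 a`. Hence the regulators satisfy `|φ₁ t - φ₂ t| ≤ sup |g₁ - g₂|`, and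
`f₁ - f₂ = (φ₁ - φ₂) + (g₁ - g₂)` costs one more copy of `sup |g₁ - g₂|`.
-/

open Set

section Supremum

variable {α : Type*} {S : Set α} {F G : α → ℝ} {M : ℝ}

lemma csSup_image_le_csSup_image_add (hS : S.Nonempty) (hG : BddAbove (G '' S))
    (h : ∀ s ∈ S, F s ≤ G s + M) : sSup (F '' S) ≤ sSup (G '' S) + M :=
  csSup_le (hS.image F) <| forall_mem_image.2 fun s hs =>
    (h s hs).trans (add_le_add_left (le_csSup hG (mem_image_of_mem G hs)) M)

lemma abs_csSup_image_sub_csSup_image_le (hS : S.Nonempty) (hF : BddAbove (F '' S))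
    (hG : BddAbove (G '' S)) (h : ∀ s ∈ S, |F s - G s| ≤ M) :
    |sSup (F '' S) - sSup (G '' S)| ≤ M := by
  rw [abs_sub_le_iff, sub_le_iff_le_add', sub_le_iff_le_add']
  exact ⟨csSup_image_le_csSup_image_add hS hG fun s hs => by linarith [(abs_le.1 (h s hs)).2],
    csSup_image_le_csSup_image_add hS hF fun s hs => by linarith [(abs_le.1 (h s hs)).1]⟩

end Supremum

lemma abs_max_zero_sub_max_zero_le {β : Type*} [AddCommGroup β] [LinearOrder β]
    [IsOrderedAddMonoid β] (a b : β) : |max 0 a - max 0 b| ≤ |a - b| := by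
  rw [max_comm 0 a, max_comm 0 b]
  exact abs_max_sub_max_le_abs a b 0

theorem skorohod_map_lipschitz_general (g₁ g₂ : ℝ → ℝ) (x : ℝ)
    (hg₁ : ContinuousOn g₁ (Icc 0 1)) (hg₂ : ContinuousOn g₂ (Icc 0 1))
    (φ₁ φ₂ f₁ f₂ : ℝ → ℝ)
    (hφ₁ : ∀ t, φ₁ t = max 0 (sSup ((fun s => -(x + g₁ s)) '' Icc 0 t)))
    (hφ₂ : ∀ t, φ₂ t = max 0 (sSup ((fun s => -(x + g₂ s)) '' Icc 0 t)))
    (hf₁ : ∀ t, f₁ t = x + φ₁ t + g₁ t)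
    (hf₂ : ∀ t, f₂ t = x + φ₂ t + g₂ t) :
    ∀ t ∈ Icc (0 : ℝ) 1,
      |f₁ t - f₂ t| ≤ 2 * sSup ((fun s => |g₁ s - g₂ s|) '' Icc 0 1) := by
  intro t ht
  set M := sSup ((fun s => |g₁ s - g₂ s|) '' Icc 0 1)
  have hM : ∀ s ∈ Icc (0 : ℝ) 1, |g₁ s - g₂ s| ≤ M := fun s hs =>
    le_csSup (isCompact_Icc.bddAbove_image (hg₁.sub hg₂).abs) (mem_image_of_mem _ hs)
  have hsub : Icc 0 t ⊆ Icc (0 : ℝ) 1 := Icc_subset_Icc_right ht.2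
  have hφ : |φ₁ t - φ₂ t| ≤ M := by
    rw [hφ₁, hφ₂]
    refine (abs_max_zero_sub_max_zero_le _ _).trans <|
      abs_csSup_image_sub_csSup_image_le ⟨0, left_mem_Icc.2 ht.1⟩
        (isCompact_Icc.bddAbove_image (continuousOn_const.add (hg₁.mono hsub)).neg)
        (isCompact_Icc.bddAbove_image (continuousOn_const.add (hg₂.mono hsub)).neg)
        fun s hs => ?_
    rw [← abs_sub_comm]
    convert hM s (hsub hs) using 2
    ring
  calc |f₁ t - f₂ t| = |(φ₁ t - φ₂ t) + (g₁ t - g₂ t)| := by rw [hf₁, hf₂]; ring_nf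
    _ ≤ |φ₁ t - φ₂ t| + |g₁ t - g₂ t| := abs_add_le _ _
    _ ≤ 2 * M := by linarith [hM t ht]

/-- The Skorohod map is 2-Lipschitz in supremum norm: if `fᵢ = x + φᵢ + gᵢ` with
`φᵢ t = max {0, max_{0 ≤ s ≤ t} -(x + gᵢ s)}`, then
`sup_{[0,1]} |f₁ - f₂| ≤ 2 sup_{[0,1]} |g₁ - g₂|`. -/
theorem skorohod_map_lipschitz (g₁ g₂ : ℝ → ℝ) (x : ℝ)
    (hg₁ : ContinuousOn g₁ (Icc 0 1)) (hg₂ : ContinuousOn g₂ (Icc 0 1))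
    (hg₁0 : g₁ 0 = 0) (hg₂0 : g₂ 0 = 0) (hx : 0 ≤ x)
    (φ₁ φ₂ f₁ f₂ : ℝ → ℝ)
    (hφ₁ : ∀ t, φ₁ t = max 0 (sSup ((fun s => -(x + g₁ s)) '' Icc 0 t)))
    (hφ₂ : ∀ t, φ₂ t = max 0 (sSup ((fun s => -(x + g₂ s)) '' Icc 0 t)))
    (hf₁ : ∀ t, f₁ t = x + φ₁ t + g₁ t)
    (hf₂ : ∀ t, f₂ t = x + φ₂ t + g₂ t) :
    ∀ t ∈ Icc (0 : ℝ) 1,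
      |f₁ t - f₂ t| ≤ 2 * sSup ((fun s => |g₁ s - g₂ s|) '' Icc 0 1) :=
  skorohod_map_lipschitz_general g₁ g₂ x hg₁ hg₂ φ₁ φ₂ f₁ f₂ hφ₁ hφ₂ hf₁ hf₂
end

section
/- Let g ∈ C¹([0,1]) with g(0) = 0, x ≥ 0, and ε > 0. Let f^ε : [0,1] → ℝ be a solution of the integral equation f^ε(t) = x + (1/ε)∫₀ᵗ (f^ε(s))⁻ ds + g(t). Then for all t ∈ [0,1], (f^ε(t))² ≤ (x² + ∫₀ᵗ (g'(s))² ds) · eᵗ. -/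
/-!
Away from the boundary `f` is differentiable with `f' = ε⁻¹ f⁻ + g'`. Since `f · f⁻ ≤ 0`, the
penalty term only decreases `f²`, and `2ab ≤ a² + b²` gives `(f²)' ≤ f² + g'²`. Gronwall's
inequality in integral form, obtained from the integrating factor `e^{-t}`, then yields the bound.
-/

open Set intervalIntegral MeasureTheory

theorem le_add_integral_mul_exp_of_deriv_le_self_add {u u' h : ℝ → ℝ} {a b : ℝ}
    (hab : a ≤ b) (hu : ContinuousOn u (Icc a b))
    (hu' : ∀ t ∈ Ioo a b, HasDerivWithinAt u (u' t) (Ioi t) t)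
    (hh : IntegrableOn h (Icc a b)) (h0 : ∀ t ∈ Ioo a b, 0 ≤ h t)
    (hle : ∀ t ∈ Ioo a b, u' t ≤ u t + h t) :
    u b ≤ (u a + ∫ s in a..b, h s) * Real.exp (b - a) := by
  have hexp : ContinuousOn (fun t => Real.exp (-t)) (Icc a b) := by fun_prop
  have hw : Real.exp (-b) * u b - Real.exp (-a) * u a ≤ ∫ s in a..b, Real.exp (-s) * h s := by
    refine sub_le_integral_of_hasDeriv_right_of_le (g' := fun t => Real.exp (-t) * (u' t - u t))
      hab (hexp.mul hu : ContinuousOn (fun t => Real.exp (-t) * u t) _) (fun t ht => ?_)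
      (hh.continuousOn_mul hexp isCompact_Icc) (fun t ht => ?_)
    · exact (((hasDerivAt_neg t).exp.hasDerivWithinAt).mul (hu' t ht)).congr_deriv (by ring)
    · exact mul_le_mul_of_nonneg_left (by linarith [hle t ht]) (Real.exp_pos (-t)).le
  have hdecay : ∫ s in a..b, Real.exp (-s) * h s ≤ Real.exp (-a) * ∫ s in a..b, h s := by
    rw [← intervalIntegral.integral_const_mul]
    have hI : ∀ {k : ℝ → ℝ}, IntegrableOn k (Icc a b) → IntervalIntegrable k volume a b :=
      (intervalIntegrable_iff_integrableOn_Icc_of_le hab).2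
    refine integral_mono_on_of_le_Ioo hab (hI (hh.continuousOn_mul hexp isCompact_Icc))
      ((hI hh).const_mul _) fun s hs => ?_
    exact mul_le_mul_of_nonneg_right (Real.exp_le_exp.2 (by linarith [hs.1])) (h0 s hs)
  have hsplit : Real.exp (b - a) = Real.exp b * Real.exp (-a) := by
    rw [sub_eq_add_neg, Real.exp_add]
  have hb : u b = Real.exp b * (Real.exp (-b) * u b) := by
    rw [← mul_assoc, ← Real.exp_add, add_neg_cancel, Real.exp_zero, one_mul]
  rw [hb, hsplit]
  nlinarith [Real.exp_pos b]

theorem hasDerivAt_of_eq_add_integral_comp {f g g' p : ℝ → ℝ} {x c a b : ℝ}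
    (hp : Continuous p) (hfc : ContinuousOn f (Icc a b))
    (hg' : ∀ t ∈ Ioo a b, HasDerivWithinAt g (g' t) (Icc a b) t)
    (hf : ∀ t ∈ Icc a b, f t = x + c * (∫ s in a..t, p (f s)) + g t) :
    ∀ t ∈ Ioo a b, HasDerivAt f (c * p (f t) + g' t) t := by
  intro t ht
  have hnhds : Icc a b ∈ nhds t := Icc_mem_nhds ht.1 ht.2
  have hpf : ContinuousOn (fun s => p (f s)) (Icc a b) := hp.comp_continuousOn hfc
  have hF : HasDerivAt (fun u => ∫ s in a..u, p (f s)) (p (f t)) t :=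
    integral_hasDerivAt_right
      ((hpf.mono (Icc_subset_Icc le_rfl ht.2.le)).intervalIntegrable_of_Icc ht.1.le)
      ((hpf.mono Ioo_subset_Icc_self).stronglyMeasurableAtFilter isOpen_Ioo t ht)
      (hpf.continuousAt hnhds)
  exact (((hF.const_mul c).const_add x).add ((hg' t ht).hasDerivAt hnhds)).congr_of_eventuallyEq
    (Filter.eventually_of_mem hnhds hf)

theorem two_mul_mul_add_le_sq_add_sq_of_penalty {c y z : ℝ} (hc : 0 ≤ c) :
    2 * y * (c * max (-y) 0 + z) ≤ y ^ 2 + z ^ 2 := by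
  have hpen : y * max (-y) 0 ≤ 0 := by
    rcases le_total y 0 with hy | hy
    · rw [max_eq_left (by linarith)]; nlinarith
    · rw [max_eq_right (by linarith), mul_zero]
  nlinarith [two_mul_le_add_sq y z, mul_nonpos_of_nonneg_of_nonpos hc hpen]

theorem penalized_ODE_square_bound_general (g g' : ℝ → ℝ) (x ε : ℝ)
    (hε : 0 < ε) (hg0 : g 0 = 0)
    (hg' : ∀ t ∈ Icc (0 : ℝ) 1, HasDerivWithinAt g (g' t) (Icc 0 1) t)
    (hg'c : ContinuousOn g' (Icc 0 1))
    (f : ℝ → ℝ) (hfc : ContinuousOn f (Icc 0 1))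
    (hf : ∀ t ∈ Icc (0 : ℝ) 1,
      f t = x + ε⁻¹ * (∫ s in (0 : ℝ)..t, max (-(f s)) 0) + g t) :
    ∀ t ∈ Icc (0 : ℝ) 1,
      (f t) ^ 2 ≤ (x ^ 2 + ∫ s in (0 : ℝ)..t, (g' s) ^ 2) * Real.exp t := by
  intro t ht
  have hderiv := hasDerivAt_of_eq_add_integral_comp (p := fun y => max (-y) 0) (by fun_prop) hfc
    (fun s hs => hg' s (Ioo_subset_Icc_self hs)) hf
  have hf0 : f 0 = x := by simpa [hg0] using hf 0 (left_mem_Icc.2 zero_le_one)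
  have hsub : Icc 0 t ⊆ Icc (0 : ℝ) 1 := Icc_subset_Icc le_rfl ht.2
  have hgronwall := le_add_integral_mul_exp_of_deriv_le_self_add ht.1 ((hfc.mono hsub).pow 2)
    (fun s hs => ((hderiv s (Ioo_subset_Ioo_right ht.2 hs)).pow 2).hasDerivWithinAt)
    ((hg'c.mono hsub).pow 2).integrableOn_Icc (fun s _ => sq_nonneg (g' s))
    (fun s _ => by simpa using two_mul_mul_add_le_sq_add_sq_of_penalty (inv_pos.2 hε).le)
  simpa [hf0] using hgronwall

/-- A priori bound for the penalized ODE: if `f^ε(t) = x + ε⁻¹∫₀ᵗ (f^ε(s))⁻ ds + g(t)`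
with `g ∈ C¹([0,1])`, `g 0 = 0`, `x ≥ 0`, then
`(f^ε t)² ≤ (x² + ∫₀ᵗ (g' s)² ds) eᵗ` on `[0,1]`. -/
theorem penalized_ODE_square_bound (g g' : ℝ → ℝ) (x ε : ℝ)
    (hx : 0 ≤ x) (hε : 0 < ε) (hg0 : g 0 = 0)
    (hg' : ∀ t ∈ Icc (0 : ℝ) 1, HasDerivWithinAt g (g' t) (Icc 0 1) t)
    (hg'c : ContinuousOn g' (Icc 0 1))
    (f : ℝ → ℝ) (hfc : ContinuousOn f (Icc 0 1))
    (hf : ∀ t ∈ Icc (0 : ℝ) 1,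
      f t = x + ε⁻¹ * (∫ s in (0 : ℝ)..t, max (-(f s)) 0) + g t) :
    ∀ t ∈ Icc (0 : ℝ) 1,
      (f t) ^ 2 ≤ (x ^ 2 + ∫ s in (0 : ℝ)..t, (g' s) ^ 2) * Real.exp t :=
  penalized_ODE_square_bound_general g g' x ε hε hg0 hg' hg'c f hfc hf
end

section
/- Let g ∈ C¹([0,1]) with g(0) = 0, x ≥ 0, ε > 0, and let f^ε solve f^ε(t) = x + (1/ε)∫₀ᵗ (f^ε(s))⁻ ds + g(t). Then |d/dt f^ε(t)| ≤ 2·sup_{s∈[0,1]}|g'(s)| for all t ∈ [0,1]. -/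
open Set intervalIntegral

/-!
The penalty term `ε⁻¹ (f^ε)⁻` is nonnegative, and it pushes `f^ε` upwards with speed greater
than `M = sup |g'|` as soon as `f^ε < -ε M`. Since `f^ε(0) = x ≥ 0`, a barrier argument keeps
`f^ε ≥ -ε M` on `[0,1]`, i.e. `0 ≤ ε⁻¹ (f^ε)⁻ ≤ M`; hence `|ḟ^ε| = |ε⁻¹ (f^ε)⁻ + g'| ≤ 2 M`.
-/

theorem ContinuousOn.hasDerivWithinAt_integral_Icc {E : Type*} [NormedAddCommGroup E]
    [NormedSpace ℝ E] [CompleteSpace E] {φ : ℝ → E} {a b t : ℝ}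
    (hφ : ContinuousOn φ (Icc a b)) (ht : t ∈ Icc a b) :
    HasDerivWithinAt (fun u => ∫ s in a..u, φ s) (φ t) (Icc a b) t := by
  have : Fact (t ∈ Icc a b) := ⟨ht⟩
  refine integral_hasDerivWithinAt_right ?_
    (hφ.stronglyMeasurableAtFilter_nhdsWithin measurableSet_Icc t) (hφ t ht)
  refine (hφ.mono ?_).intervalIntegrable
  rw [uIcc_of_le ht.1]
  exact Icc_subset_Icc_right ht.2

theorem hasDerivWithinAt_of_eq_add_mul_integral_add {f g g' φ : ℝ → ℝ} {a b x c : ℝ}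
    (hφ : ContinuousOn φ (Icc a b))
    (hg' : ∀ t ∈ Icc a b, HasDerivWithinAt g (g' t) (Icc a b) t)
    (hf : ∀ t ∈ Icc a b, f t = x + c * (∫ s in a..t, φ s) + g t) :
    ∀ t ∈ Icc a b, HasDerivWithinAt f (c * φ t + g' t) (Icc a b) t := fun t ht =>
  ((((hφ.hasDerivWithinAt_integral_Icc ht).const_mul c).const_add x).add (hg' t ht)).congr
    hf (hf t ht)

theorem le_of_hasDerivWithinAt_pos_of_lt {f f' : ℝ → ℝ} {a b m : ℝ}
    (hf : ContinuousOn f (Icc a b)) (hf' : ∀ x ∈ Ico a b, HasDerivWithinAt f (f' x) (Ici x) x)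
    (ha : m ≤ f a) (hpos : ∀ x ∈ Ico a b, f x < m → 0 < f' x) :
    ∀ ⦃x⦄, x ∈ Icc a b → m ≤ f x := by
  intro x hx
  refine le_of_forall_pos_le_add fun δ hδ => ?_
  -- on the level `m - δ` the contact condition of the fencing theorem is strict
  have hfence := image_le_of_deriv_right_lt_deriv_boundary (f := fun y => -f y) (B := fun _ => δ - m)
    (B' := 0) hf.neg (fun y hy => (hf' y hy).neg) (by linarith) (fun _ => hasDerivAt_const _ _)
    (fun y hy hcontact => by
      have hincr := hpos y hy (by linarith)
      simp only [Pi.zero_apply]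
      linarith) hx
  linarith

theorem abs_inv_mul_max_neg_zero_add_le {ε M y z : ℝ} (hε : 0 < ε) (hy : -(ε * M) ≤ y)
    (hz : |z| ≤ M) : |ε⁻¹ * max (-y) 0 + z| ≤ 2 * M := by
  have hM : 0 ≤ M := (abs_nonneg z).trans hz
  have hpen : 0 ≤ ε⁻¹ * max (-y) 0 := by positivity
  have hpen' : ε⁻¹ * max (-y) 0 ≤ M := by
    rw [inv_mul_le_iff₀ hε]
    exact max_le (by linarith) (by positivity)
  calc |ε⁻¹ * max (-y) 0 + z| ≤ |ε⁻¹ * max (-y) 0| + |z| := abs_add_le _ _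
    _ ≤ M + M := add_le_add (by rwa [abs_of_nonneg hpen]) hz
    _ = 2 * M := by ring

theorem inv_mul_max_neg_zero_add_pos {ε M y z : ℝ} (hε : 0 < ε) (hy : y < -(ε * M))
    (hz : |z| ≤ M) : 0 < ε⁻¹ * max (-y) 0 + z := by
  have hpen : M < ε⁻¹ * max (-y) 0 := by
    rw [lt_inv_mul_iff₀ hε]
    exact lt_max_of_lt_left (by linarith)
  linarith [neg_abs_le z]

/-- Uniform derivative bound for the penalized ODE: if
`f^ε(t) = x + ε⁻¹∫₀ᵗ (f^ε(s))⁻ ds + g(t)` with `g ∈ C¹([0,1])`, then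
`|d/dt f^ε(t)| ≤ 2 sup_{[0,1]} |g'|` on `[0,1]`. -/
theorem penalized_ODE_derivative_bound (g g' : ℝ → ℝ) (x ε : ℝ)
    (hx : 0 ≤ x) (hε : 0 < ε) (hg0 : g 0 = 0)
    (hg' : ∀ t ∈ Icc (0 : ℝ) 1, HasDerivWithinAt g (g' t) (Icc 0 1) t)
    (hg'c : ContinuousOn g' (Icc 0 1))
    (f : ℝ → ℝ) (hfc : ContinuousOn f (Icc 0 1))
    (hf : ∀ t ∈ Icc (0 : ℝ) 1,
      f t = x + ε⁻¹ * (∫ s in (0 : ℝ)..t, max (-(f s)) 0) + g t) :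
    ∀ t ∈ Icc (0 : ℝ) 1,
      |derivWithin f (Icc 0 1) t| ≤ 2 * sSup ((fun s => |g' s|) '' Icc 0 1) := by
  intro t ht
  set M := sSup ((fun s => |g' s|) '' Icc 0 1)
  have hM : ∀ s ∈ Icc (0 : ℝ) 1, |g' s| ≤ M := fun s hs =>
    le_csSup (isCompact_Icc.image_of_continuousOn hg'c.abs).bddAbove (mem_image_of_mem _ hs)
  have hderiv := hasDerivWithinAt_of_eq_add_mul_integral_add
    (φ := fun s => max (-(f s)) 0) (by fun_prop) hg' hf
  have hf0 : -(ε * M) ≤ f 0 := by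
    have hM0 : 0 ≤ M := (abs_nonneg _).trans (hM 0 (left_mem_Icc.2 zero_le_one))
    have hfx : f 0 = x := by simpa [hg0] using hf 0 (left_mem_Icc.2 zero_le_one)
    linarith [mul_nonneg hε.le hM0]
  have hlow : ∀ s ∈ Icc (0 : ℝ) 1, -(ε * M) ≤ f s := le_of_hasDerivWithinAt_pos_of_lt hfc
    (fun s hs => (hderiv s (Ico_subset_Icc_self hs)).mono_of_mem_nhdsWithin
      (Icc_mem_nhdsGE_of_mem hs)) hf0
    (fun s hs hlt => inv_mul_max_neg_zero_add_pos hε hlt (hM s (Ico_subset_Icc_self hs)))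
  rw [(hderiv t ht).derivWithin (uniqueDiffOn_Icc zero_lt_one t ht)]
  exact abs_inv_mul_max_neg_zero_add_le hε (hlow t ht) (hM t ht)
end

section
/- Comparison for the penalized ODE: for 0 < ε₁ ≤ ε₂, g ∈ C¹([0,1]) with g(0)=0 and x ≥ 0, let f^{ε_i} solve f^{ε_i}(t) = x + (1/ε_i)∫₀ᵗ (f^{ε_i}(s))⁻ ds + g(t). Then f^{ε₂}(t) ≤ f^{ε₁}(t) for all t ∈ [0,1]; i.e., the family {f^ε} is pointwise nondecreasing as ε decreases to 0. -/
/-!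
Let `h = f₂ - f₁`; then `h 0 = 0`. On any interval `[u, t]` where `h ≥ 0` we have `f₁ ≤ f₂`,
hence `ε₂⁻¹ (f₂)⁻ ≤ ε₁⁻¹ (f₁)⁻`, and subtracting the two integral equations gives `h t ≤ h u`.
If `h` were positive somewhere, starting from the last point `u` before it where `h ≤ 0` would
then keep `h ≤ 0`, a contradiction.
-/

open Set intervalIntegral

theorem ContinuousOn.nonpos_on_Icc_of_le_where_nonneg {h : ℝ → ℝ} {a b : ℝ}
    (hc : ContinuousOn h (Icc a b)) (ha : h a ≤ 0)
    (hdec : ∀ u ∈ Icc a b, ∀ t ∈ Icc u b, (∀ s ∈ Icc u t, 0 ≤ h s) → h t ≤ h u) :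
    ∀ t ∈ Icc a b, h t ≤ 0 := by
  intro t ht
  by_contra! hpos
  have hct : ContinuousOn h (Icc a t) := hc.mono (Icc_subset_Icc_right ht.2)
  set S := Icc a t ∩ h ⁻¹' Iic 0
  have hS : IsClosed S := hct.preimage_isClosed_of_isClosed isClosed_Icc isClosed_Iic
  have hSbdd : BddAbove S := ⟨t, fun s hs => hs.1.2⟩
  have huS : sSup S ∈ S := hS.csSup_mem ⟨a, ⟨le_rfl, ht.1⟩, ha⟩ hSbdd
  set u := sSup S
  have hut : u ≠ t := fun hut => (hut ▸ huS.2 : h t ≤ 0).not_gt hpos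
  have hpos_after : Ioc u t ⊆ Icc u t ∩ h ⁻¹' Ici 0 := fun s hs =>
    ⟨Ioc_subset_Icc_self hs, (show 0 < h s from not_le.mp fun hs0 =>
      (le_csSup hSbdd ⟨⟨huS.1.1.trans hs.1.le, hs.2⟩, hs0⟩).not_gt hs.1).le⟩
  have hclosed : IsClosed (Icc u t ∩ h ⁻¹' Ici 0) :=
    (hct.mono (Icc_subset_Icc_left huS.1.1)).preimage_isClosed_of_isClosed
      isClosed_Icc isClosed_Ici
  have hnonneg : Icc u t ⊆ Icc u t ∩ h ⁻¹' Ici 0 :=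
    (closure_Ioc hut).symm.subset.trans (hclosed.closure_subset_iff.mpr hpos_after)
  have hdrop := hdec u ⟨huS.1.1, huS.1.2.trans ht.2⟩ t ⟨huS.1.2, ht.2⟩
    fun s hs => (hnonneg hs).2
  exact (hdrop.trans huS.2).not_gt hpos

theorem inv_mul_negPart_le_inv_mul_negPart {ε₁ ε₂ y₁ y₂ : ℝ} (hε₁ : 0 < ε₁) (hε : ε₁ ≤ ε₂)
    (hy : y₁ ≤ y₂) : ε₂⁻¹ * y₂⁻ ≤ ε₁⁻¹ * y₁⁻ :=
  mul_le_mul (inv_anti₀ hε₁ hε) (negPart_anti hy) (negPart_nonneg _) (inv_nonneg.mpr hε₁.le)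

theorem inv_mul_integral_negPart_le {f₁ f₂ : ℝ → ℝ} {u t ε₁ ε₂ : ℝ} (hε₁ : 0 < ε₁)
    (hε : ε₁ ≤ ε₂) (hut : u ≤ t) (hf₁c : ContinuousOn f₁ (Icc u t))
    (hf₂c : ContinuousOn f₂ (Icc u t)) (hf : ∀ s ∈ Icc u t, f₁ s ≤ f₂ s) :
    ε₂⁻¹ * (∫ s in u..t, (f₂ s)⁻) ≤ ε₁⁻¹ * (∫ s in u..t, (f₁ s)⁻) := by
  have hint {f : ℝ → ℝ} (hfc : ContinuousOn f (Icc u t)) (ε : ℝ) :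
      IntervalIntegrable (fun s => ε⁻¹ * (f s)⁻) MeasureTheory.volume u t :=
    (continuousOn_const.mul (continuous_negPart.comp_continuousOn
      (uIcc_of_le hut ▸ hfc))).intervalIntegrable
  rw [← integral_const_mul, ← integral_const_mul]
  exact integral_mono_on hut (hint hf₂c ε₂) (hint hf₁c ε₁) fun s hs =>
    inv_mul_negPart_le_inv_mul_negPart hε₁ hε (hf s hs)

section IntegralEquation

variable {f g : ℝ → ℝ} {a b x ε : ℝ}

theorem sub_eq_of_eq_add_inv_mul_integral_negPart (hfc : ContinuousOn f (Icc a b))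
    (hf : ∀ t ∈ Icc a b, f t = x + ε⁻¹ * (∫ s in a..t, (f s)⁻) + g t)
    {u t : ℝ} (hu : u ∈ Icc a b) (ht : t ∈ Icc a b) :
    f t - f u = ε⁻¹ * (∫ s in u..t, (f s)⁻) + (g t - g u) := by
  have hint : ∀ v ∈ Icc a b, IntervalIntegrable (fun s => (f s)⁻) MeasureTheory.volume a v :=
    fun v hv => (continuous_negPart.comp_continuousOn
      (hfc.mono (by rw [uIcc_of_le hv.1]; exact Icc_subset_Icc_right hv.2))).intervalIntegrable
  rw [hf t ht, hf u hu, ← integral_interval_sub_left (hint t ht) (hint u hu)]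
  ring

theorem eq_of_eq_add_inv_mul_integral_negPart
    (hf : ∀ t ∈ Icc a b, f t = x + ε⁻¹ * (∫ s in a..t, (f s)⁻) + g t) (hab : a ≤ b) :
    f a = x + g a := by
  simpa using hf a ⟨le_rfl, hab⟩

end IntegralEquation

theorem penalized_ODE_comparison_general (g : ℝ → ℝ) (x ε₁ ε₂ : ℝ)
    (hε₁ : 0 < ε₁) (hε : ε₁ ≤ ε₂)
    (f₁ f₂ : ℝ → ℝ)
    (hf₁c : ContinuousOn f₁ (Icc 0 1)) (hf₂c : ContinuousOn f₂ (Icc 0 1))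
    (hf₁ : ∀ t ∈ Icc (0 : ℝ) 1,
      f₁ t = x + ε₁⁻¹ * (∫ s in (0 : ℝ)..t, max (-(f₁ s)) 0) + g t)
    (hf₂ : ∀ t ∈ Icc (0 : ℝ) 1,
      f₂ t = x + ε₂⁻¹ * (∫ s in (0 : ℝ)..t, max (-(f₂ s)) 0) + g t) :
    ∀ t ∈ Icc (0 : ℝ) 1, f₂ t ≤ f₁ t := by
  have hle : ∀ t ∈ Icc (0 : ℝ) 1, f₂ t - f₁ t ≤ 0 := by
    refine (hf₂c.sub hf₁c).nonpos_on_Icc_of_le_where_nonneg ?_ ?_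
    · rw [Pi.sub_apply, eq_of_eq_add_inv_mul_integral_negPart hf₁ zero_le_one,
        eq_of_eq_add_inv_mul_integral_negPart hf₂ zero_le_one, sub_self]
    intro u hu t ht hnonneg
    simp only [Pi.sub_apply]
    have hsub : Icc u t ⊆ Icc 0 1 := Icc_subset_Icc hu.1 ht.2
    have ht' : t ∈ Icc (0 : ℝ) 1 := ⟨hu.1.trans ht.1, ht.2⟩
    have hcomp := inv_mul_integral_negPart_le hε₁ hε ht.1 (hf₁c.mono hsub) (hf₂c.mono hsub)
      fun s hs => sub_nonneg.mp (hnonneg s hs)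
    linarith [sub_eq_of_eq_add_inv_mul_integral_negPart hf₁c hf₁ hu ht',
      sub_eq_of_eq_add_inv_mul_integral_negPart hf₂c hf₂ hu ht']
  exact fun t ht => sub_nonpos.mp (hle t ht)

/-- Comparison for the penalized ODE: for `0 < ε₁ ≤ ε₂` the corresponding solutions
satisfy `f^{ε₂} ≤ f^{ε₁}` pointwise on `[0,1]`. -/
theorem penalized_ODE_comparison (g g' : ℝ → ℝ) (x ε₁ ε₂ : ℝ)
    (hx : 0 ≤ x) (hε₁ : 0 < ε₁) (hε : ε₁ ≤ ε₂) (hg0 : g 0 = 0)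
    (hg' : ∀ t ∈ Icc (0 : ℝ) 1, HasDerivWithinAt g (g' t) (Icc 0 1) t)
    (hg'c : ContinuousOn g' (Icc 0 1))
    (f₁ f₂ : ℝ → ℝ)
    (hf₁c : ContinuousOn f₁ (Icc 0 1)) (hf₂c : ContinuousOn f₂ (Icc 0 1))
    (hf₁ : ∀ t ∈ Icc (0 : ℝ) 1,
      f₁ t = x + ε₁⁻¹ * (∫ s in (0 : ℝ)..t, max (-(f₁ s)) 0) + g t)
    (hf₂ : ∀ t ∈ Icc (0 : ℝ) 1,
      f₂ t = x + ε₂⁻¹ * (∫ s in (0 : ℝ)..t, max (-(f₂ s)) 0) + g t) :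
    ∀ t ∈ Icc (0 : ℝ) 1, f₂ t ≤ f₁ t :=
  penalized_ODE_comparison_general g x ε₁ ε₂ hε₁ hε f₁ f₂ hf₁c hf₂c hf₁ hf₂
end

section
/- Let g ∈ C¹([0,1]) with g(0)=0 and x ≥ 0, and for ε > 0 let f^ε solve the penalized ODE f^ε(t) = x + ε⁻¹∫₀ᵗ (f^ε(s))⁻ ds + g(t). If f(t) := lim_{ε→0} f^ε(t) exists pointwise and is finite on [0,1], then f(t) ≥ 0 for all t ∈ [0,1]. -/
open Set Filter intervalIntegral

/-!
Let `M` bound `|g'|` on `[0,1]`. For each `ε > 0` the solution stays above the barrier `-ε M`: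
at a last time `t₀` where `F ε ≥ -ε M` before a time `t₁` where `F ε < -ε M`, the penalty
`ε⁻¹ (F ε)⁻ > M` on `(t₀, t₁]` pushes `F ε` up at least as fast as `g` can pull it down, so
`F ε t₁ ≥ F ε t₀`, a contradiction. Letting `ε → 0` gives `f ≥ 0`.
-/

theorem exists_mem_Ico_forall_Ioc_lt {φ : ℝ → ℝ} {a b c : ℝ} (hab : a ≤ b)
    (hφ : ContinuousOn φ (Icc a b)) (ha : c ≤ φ a) (hb : φ b < c) :
    ∃ t₀ ∈ Ico a b, c ≤ φ t₀ ∧ ∀ s ∈ Ioc t₀ b, φ s < c := by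
  have hclosed : IsClosed (Icc a b ∩ φ ⁻¹' Ici c) :=
    hφ.preimage_isClosed_of_isClosed isClosed_Icc isClosed_Ici
  obtain ⟨t₀, ⟨ht₀, hφt₀⟩, hmax⟩ :=
    (isCompact_Icc.of_isClosed_subset hclosed inter_subset_left).exists_isGreatest
      ⟨a, ⟨left_mem_Icc.2 hab, ha⟩⟩
  have ht₀b : t₀ ≠ b := by rintro rfl; exact (not_le.2 hb) hφt₀
  refine ⟨t₀, ⟨ht₀.1, lt_of_le_of_ne ht₀.2 ht₀b⟩, hφt₀, fun s hs => ?_⟩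
  by_contra! hs'
  exact not_le.2 hs.1 (hmax ⟨⟨ht₀.1.trans hs.1.le, hs.2⟩, hs'⟩)

theorem mul_sub_le_integral_of_le_on_Ioo {f : ℝ → ℝ} {a b c : ℝ} (hab : a ≤ b)
    (hf : IntervalIntegrable f MeasureTheory.volume a b) (h : ∀ s ∈ Ioo a b, c ≤ f s) :
    c * (b - a) ≤ ∫ s in a..b, f s := by
  simpa [mul_comm] using integral_mono_on_of_le_Ioo hab intervalIntegrable_const hf h

section Penalized

variable {F g : ℝ → ℝ} {x ε a b : ℝ}

theorem penalized_sub_eq (hFc : ContinuousOn F (Icc a b))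
    (hF : ∀ t ∈ Icc a b, F t = x + ε⁻¹ * (∫ s in a..t, max (-F s) 0) + g t)
    {t₀ t₁ : ℝ} (ht₀ : t₀ ∈ Icc a b) (ht₁ : t₁ ∈ Icc a b) :
    F t₁ - F t₀ = ε⁻¹ * (∫ s in t₀..t₁, max (-F s) 0) + (g t₁ - g t₀) := by
  have hint : ∀ t ∈ Icc a b, IntervalIntegrable (fun s => max (-F s) 0) MeasureTheory.volume a t :=
    fun t ht => ((hFc.neg.sup continuousOn_const).mono
      (Icc_subset_Icc le_rfl ht.2)).intervalIntegrable_of_Icc ht.1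
  rw [hF t₁ ht₁, hF t₀ ht₀, ← integral_interval_sub_left (hint t₁ ht₁) (hint t₀ ht₀)]
  ring

theorem neg_mul_le_of_penalized {M : ℝ} (hε : 0 < ε)
    (hg : ∀ s ∈ Icc a b, ∀ t ∈ Icc a b, ‖g t - g s‖ ≤ M * ‖t - s‖)
    (hFc : ContinuousOn F (Icc a b))
    (hF : ∀ t ∈ Icc a b, F t = x + ε⁻¹ * (∫ s in a..t, max (-F s) 0) + g t)
    (ha : -(ε * M) ≤ F a) :
    ∀ t ∈ Icc a b, -(ε * M) ≤ F t := by
  intro t₁ ht₁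
  by_contra! hlt
  obtain ⟨t₀, ht₀, hFt₀, hbelow⟩ :=
    exists_mem_Ico_forall_Ioc_lt ht₁.1 (hFc.mono (Icc_subset_Icc le_rfl ht₁.2)) ha hlt
  have ht₀' : t₀ ∈ Icc a b := ⟨ht₀.1, ht₀.2.le.trans ht₁.2⟩
  have hpenalty : ε * M * (t₁ - t₀) ≤ ∫ s in t₀..t₁, max (-F s) 0 :=
    mul_sub_le_integral_of_le_on_Ioo ht₀.2.le
      (((hFc.neg.sup continuousOn_const).mono
        (Icc_subset_Icc ht₀'.1 ht₁.2)).intervalIntegrable_of_Icc ht₀.2.le)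
      fun s hs => by linarith [hbelow s (Ioo_subset_Ioc_self hs), le_max_left (-F s) 0]
  have hpush : M * (t₁ - t₀) ≤ ε⁻¹ * ∫ s in t₀..t₁, max (-F s) 0 := by
    rw [le_inv_mul_iff₀ hε]; linarith
  have hpull : -(M * (t₁ - t₀)) ≤ g t₁ - g t₀ := by
    have := hg t₀ ht₀' t₁ ht₁
    rw [Real.norm_eq_abs, Real.norm_eq_abs, abs_of_nonneg (sub_nonneg.2 ht₀.2.le)] at this
    exact neg_le_of_abs_le this
  linarith [penalized_sub_eq hFc hF ht₀' ht₁]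

end Penalized

/-- If the solutions of the penalized ODEs converge pointwise (as `ε → 0⁺`) to a finite
limit `f` on `[0,1]`, then the limit is nonnegative. -/
theorem penalized_ODE_limit_nonneg (g g' : ℝ → ℝ) (x : ℝ)
    (hx : 0 ≤ x) (hg0 : g 0 = 0)
    (hg' : ∀ t ∈ Icc (0 : ℝ) 1, HasDerivWithinAt g (g' t) (Icc 0 1) t)
    (hg'c : ContinuousOn g' (Icc 0 1))
    (F : ℝ → ℝ → ℝ)
    (hFc : ∀ ε : ℝ, 0 < ε → ContinuousOn (F ε) (Icc 0 1))
    (hF : ∀ ε : ℝ, 0 < ε → ∀ t ∈ Icc (0 : ℝ) 1,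
      F ε t = x + ε⁻¹ * (∫ s in (0 : ℝ)..t, max (-(F ε s)) 0) + g t)
    (f : ℝ → ℝ)
    (hlim : ∀ t ∈ Icc (0 : ℝ) 1,
      Tendsto (fun ε => F ε t) (nhdsWithin 0 (Ioi 0)) (nhds (f t))) :
    ∀ t ∈ Icc (0 : ℝ) 1, 0 ≤ f t := by
  obtain ⟨M, hM⟩ := isCompact_Icc.exists_bound_of_continuousOn hg'c
  have hM0 : 0 ≤ M := (norm_nonneg _).trans (hM 0 (left_mem_Icc.2 zero_le_one))
  have hlip := fun s (hs : s ∈ Icc (0 : ℝ) 1) t (ht : t ∈ Icc (0 : ℝ) 1) =>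
    (convex_Icc 0 1).norm_image_sub_le_of_norm_hasDerivWithin_le hg' hM hs ht
  intro t ht
  have hbarrier : ∀ᶠ ε in nhdsWithin 0 (Ioi 0), -(ε * M) ≤ F ε t := by
    filter_upwards [self_mem_nhdsWithin] with ε (hε : 0 < ε)
    refine neg_mul_le_of_penalized hε hlip (hFc ε hε) (hF ε hε) ?_ t ht
    rw [hF ε hε 0 (left_mem_Icc.2 zero_le_one), integral_same, hg0]
    nlinarith
  have hvanish : Tendsto (fun ε : ℝ => -(ε * M)) (nhdsWithin 0 (Ioi 0)) (nhds 0) := by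
    simpa using ((tendsto_id.mul_const M).neg).mono_left (nhdsWithin_le_nhds (a := (0 : ℝ)))
  exact le_of_tendsto_of_tendsto hvanish (hlim t ht) hbarrier
end

section
/- Let g ∈ C¹([0,1]) with g(0) = 0 and x ≥ 0. As ε → 0, the solutions f^ε of f^ε(t) = x + ε⁻¹∫₀ᵗ (f^ε(s))⁻ ds + g(t) converge uniformly on [0,1] (along a subsequence) to f, and ε⁻¹∫₀^· (f^ε(s))⁻ ds converges uniformly to φ, where (f, φ) is the unique solution of the Skorohod equation: φ continuous nondecreasing with φ(0)=0, f = x + φ + g ≥ 0, and ∫₀¹ 1_{f(s)>0} dφ(s) = 0. -/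
/-!
The limit is explicit: with `y = x + g`, the regulator is `φ t = sup_{u ≤ t} (y u)⁻`, and the
whole family converges, at rate `|ψ_ε - φ| ≤ K ε` for the penalization term
`ψ_ε = ε⁻¹ ∫₀^· (F ε)⁻` and a Lipschitz constant `K` of `g`. Since `F ε = y + ψ_ε`, two
last-exit arguments compare `ψ_ε` with `φ`. While `F ε < -K ε`, `ψ_ε` grows faster than `g` can
decrease, so `F ε ≥ -K ε`, which gives `φ ≤ ψ_ε + K ε`. Conversely `ψ_ε` grows only where
`y + ψ_ε < 0 ≤ y + φ`, so it never overtakes `φ`.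
-/

open Set Filter intervalIntegral
open scoped NNReal Topology

theorem ContinuousOn.exists_last_nonneg {h : ℝ → ℝ} {a b : ℝ} (hab : a ≤ b)
    (hh : ContinuousOn h (Icc a b)) (ha : 0 ≤ h a) :
    ∃ c ∈ Icc a b, 0 ≤ h c ∧ ∀ u ∈ Ioc c b, h u < 0 := by
  set S := Icc a b ∩ h ⁻¹' Ici 0
  have hS : IsCompact S :=
    isCompact_Icc.of_isClosed_subset (hh.preimage_isClosed_of_isClosed isClosed_Icc isClosed_Ici)
      inter_subset_left
  obtain ⟨c, ⟨hc, hhc⟩, hmax⟩ := hS.exists_isGreatest ⟨a, ⟨left_mem_Icc.2 hab, ha⟩⟩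
  refine ⟨c, hc, hhc, fun u hu => lt_of_not_ge fun hhu => ?_⟩
  exact (hmax ⟨⟨hc.1.trans hu.1.le, hu.2⟩, hhu⟩).not_gt hu.1

theorem exists_lipschitzOnWith_of_hasDerivWithinAt {f f' : ℝ → ℝ} {a b : ℝ}
    (hf : ∀ t ∈ Icc a b, HasDerivWithinAt f (f' t) (Icc a b) t)
    (hf' : ContinuousOn f' (Icc a b)) : ∃ K, LipschitzOnWith K f (Icc a b) := by
  obtain ⟨K, hK⟩ := (isCompact_Icc.image_of_continuousOn hf'.nnnorm).bddAbove
  exact ⟨K, (convex_Icc a b).lipschitzOnWith_of_nnnorm_hasDerivWithin_le hf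
    fun t ht => hK (mem_image_of_mem _ ht)⟩

theorem tendstoUniformlyOn_of_dist_le {ι α β : Type*} [PseudoMetricSpace β] {l : Filter ι}
    {F : ι → α → β} {f : α → β} {s : Set α} {b : ι → ℝ} (hb : Tendsto b l (𝓝 0))
    (h : ∀ i, ∀ t ∈ s, dist (F i t) (f t) ≤ b i) : TendstoUniformlyOn F f l s := by
  rw [Metric.tendstoUniformlyOn_iff]
  intro δ hδ
  filter_upwards [hb.eventually_lt_const hδ] with i hi t ht
  rw [dist_comm]
  exact (h i t ht).trans_lt hi

theorem ContinuousOn.max_neg_zero {f : ℝ → ℝ} {s : Set ℝ} (hf : ContinuousOn f s) :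
    ContinuousOn (fun u => max (-f u) 0) s :=
  hf.neg.sup' continuousOn_const

noncomputable def skorohodRegulator (y : ℝ → ℝ) (t : ℝ) : ℝ :=
  sSup ((fun u => max (-y u) 0) '' Icc 0 t)

section SkorohodRegulator

variable {y : ℝ → ℝ} {T s t u c : ℝ}

theorem le_skorohodRegulator (hy : ContinuousOn y (Icc 0 T)) (ht : t ≤ T) (hu : u ∈ Icc 0 t) :
    max (-y u) 0 ≤ skorohodRegulator y t := by
  refine le_csSup ?_ (mem_image_of_mem _ hu)
  exact (isCompact_Icc.image_of_continuousOn
    ((hy.mono (Icc_subset_Icc_right ht)).max_neg_zero)).bddAbove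

theorem skorohodRegulator_le (ht : 0 ≤ t) (h : ∀ u ∈ Icc 0 t, max (-y u) 0 ≤ c) :
    skorohodRegulator y t ≤ c :=
  csSup_le ((nonempty_Icc.2 ht).image _) (forall_mem_image.2 h)

theorem skorohodRegulator_zero (hy0 : 0 ≤ y 0) : skorohodRegulator y 0 = 0 := by
  simp [skorohodRegulator, hy0]

theorem skorohodRegulator_nonneg (hy : ContinuousOn y (Icc 0 T)) (ht : t ∈ Icc 0 T) :
    0 ≤ skorohodRegulator y t :=
  (le_max_right _ _).trans (le_skorohodRegulator hy ht.2 ⟨le_rfl, ht.1⟩)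

theorem add_skorohodRegulator_nonneg (hy : ContinuousOn y (Icc 0 T)) (ht : t ∈ Icc 0 T) :
    0 ≤ y t + skorohodRegulator y t := by
  have := (le_max_left _ _).trans (le_skorohodRegulator hy ht.2 ⟨ht.1, le_rfl⟩)
  linarith

theorem monotoneOn_skorohodRegulator (hy : ContinuousOn y (Icc 0 T)) :
    MonotoneOn (skorohodRegulator y) (Icc 0 T) := fun _ hs _ ht hst =>
  skorohodRegulator_le hs.1 fun _ hu => le_skorohodRegulator hy ht.2 ⟨hu.1, hu.2.trans hst⟩

theorem skorohodRegulator_le_add_mul {K : ℝ≥0} (hy : LipschitzOnWith K y (Icc 0 T))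
    (hs : s ∈ Icc 0 T) (ht : t ∈ Icc 0 T) (hst : s ≤ t) :
    skorohodRegulator y t ≤ skorohodRegulator y s + K * (t - s) := by
  have hK : 0 ≤ (K : ℝ) * (t - s) := mul_nonneg K.2 (sub_nonneg.2 hst)
  refine skorohodRegulator_le ht.1 fun u hu => ?_
  rcases le_total u s with hus | hsu
  · linarith [le_skorohodRegulator hy.continuousOn hs.2 ⟨hu.1, hus⟩]
  · have hys : y s ≤ y u + K * (u - s) := by
      simpa [Real.dist_eq, abs_of_nonpos (sub_nonpos.2 hsu)] using
        hy.le_add_mul hs ⟨hu.1, hu.2.trans ht.2⟩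
    have hφs := le_skorohodRegulator hy.continuousOn hs.2 ⟨hs.1, le_rfl⟩
    have : (K : ℝ) * (u - s) ≤ K * (t - s) := by gcongr; exact hu.2
    exact max_le (by linarith [le_max_left (-y s) 0])
      (by linarith [skorohodRegulator_nonneg hy.continuousOn hs])

theorem LipschitzOnWith.skorohodRegulator {K : ℝ≥0} (hy : LipschitzOnWith K y (Icc 0 T)) :
    LipschitzOnWith K (skorohodRegulator y) (Icc 0 T) := by
  refine LipschitzOnWith.of_le_add_mul K fun s hs t ht => ?_
  rcases le_total s t with hst | hts
  · have : 0 ≤ (K : ℝ) * dist s t := by positivity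
    linarith [monotoneOn_skorohodRegulator hy.continuousOn hs ht hst]
  · simpa [Real.dist_eq, abs_of_nonneg (sub_nonneg.2 hts)] using
      skorohodRegulator_le_add_mul hy ht hs hts

theorem skorohodRegulator_eq_of_pos (hy : ContinuousOn y (Icc 0 T)) (hs : s ∈ Icc 0 T)
    (ht : t ∈ Icc 0 T) (hst : s ≤ t) (hpos : ∀ u ∈ Icc s t, 0 < y u + skorohodRegulator y u) :
    skorohodRegulator y s = skorohodRegulator y t := by
  refine le_antisymm (monotoneOn_skorohodRegulator hy hs ht hst) ?_
  obtain ⟨u, hu, hmax⟩ := isCompact_Icc.exists_sSup_image_eq (nonempty_Icc.2 ht.1)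
    (hy.mono (Icc_subset_Icc_right ht.2)).max_neg_zero
  change skorohodRegulator y t = max (-y u) 0 at hmax
  rcases le_total u s with hus | hsu
  · exact hmax ▸ le_skorohodRegulator hy hs.2 ⟨hu.1, hus⟩
  · -- `-y u < φ u ≤ φ t = max (-y u) 0` forces `y u > 0`, so `φ t = 0`
    have hφu := monotoneOn_skorohodRegulator hy ⟨hu.1, hu.2.trans ht.2⟩ ht hu.2
    have hyu : -y u < max (-y u) 0 := by linarith [hpos u ⟨hsu, hu.2⟩]
    rw [hmax, max_eq_right ((lt_max_iff.1 hyu).resolve_left (lt_irrefl _)).le]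
    exact skorohodRegulator_nonneg hy hs

end SkorohodRegulator

noncomputable def penalization (ε : ℝ) (f : ℝ → ℝ) (t : ℝ) : ℝ :=
  ε⁻¹ * ∫ s in (0 : ℝ)..t, max (-f s) 0

section Penalization

variable {ε T a b : ℝ} {f : ℝ → ℝ}

theorem penalization_zero : penalization ε f 0 = 0 := by
  simp [penalization]

theorem intervalIntegrable_max_neg_zero (hf : ContinuousOn f (Icc 0 T)) (ha : a ∈ Icc 0 T)
    (hb : b ∈ Icc 0 T) : IntervalIntegrable (fun s => max (-f s) 0) MeasureTheory.volume a b :=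
  (hf.max_neg_zero.mono (uIcc_subset_Icc ha hb)).intervalIntegrable

theorem penalization_sub_penalization (hf : ContinuousOn f (Icc 0 T)) (ha : a ∈ Icc 0 T)
    (hb : b ∈ Icc 0 T) :
    penalization ε f b - penalization ε f a = ε⁻¹ * ∫ s in a..b, max (-f s) 0 := by
  have h0 : (0 : ℝ) ∈ Icc 0 T := ⟨le_rfl, ha.1.trans ha.2⟩
  rw [penalization, penalization, ← mul_sub, integral_interval_sub_left
    (intervalIntegrable_max_neg_zero hf h0 hb) (intervalIntegrable_max_neg_zero hf h0 ha)]

theorem monotoneOn_penalization (hε : 0 ≤ ε) (hf : ContinuousOn f (Icc 0 T)) :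
    MonotoneOn (penalization ε f) (Icc 0 T) := fun a ha b hb hab => by
  rw [← sub_nonneg, penalization_sub_penalization hf ha hb]
  exact mul_nonneg (inv_nonneg.2 hε) (integral_nonneg hab fun _ _ => le_max_right _ _)

theorem continuousOn_penalization (hf : ContinuousOn f (Icc 0 T)) :
    ContinuousOn (penalization ε f) (Icc 0 T) := by
  intro t ht
  have hT : 0 ≤ T := ht.1.trans ht.2
  have hprim := continuousOn_primitive_interval' (intervalIntegrable_max_neg_zero hf
    (left_mem_Icc.2 hT) (right_mem_Icc.2 hT)) left_mem_uIcc
  rw [uIcc_of_le hT] at hprim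
  exact (continuousWithinAt_const.mul (hprim t ht))

end Penalization

section PenalizedSolution

variable {ε T : ℝ} {K : ℝ≥0} {y F : ℝ → ℝ}

theorem neg_mul_le_of_penalized_s14 (hε : 0 < ε) (hy : LipschitzOnWith K y (Icc 0 T)) (hy0 : 0 ≤ y 0)
    (hFc : ContinuousOn F (Icc 0 T)) (hF : ∀ t ∈ Icc 0 T, F t = y t + penalization ε F t)
    {t : ℝ} (ht : t ∈ Icc 0 T) : -(K * ε) ≤ F t := by
  have h0 : (0 : ℝ) ∈ Icc 0 T := ⟨le_rfl, ht.1.trans ht.2⟩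
  have hF0 : 0 ≤ F 0 + K * ε := by
    rw [hF 0 h0, penalization_zero]; positivity
  obtain ⟨c, hc, hFc', hlt⟩ := ContinuousOn.exists_last_nonneg (h := fun u => F u + K * ε) ht.1
    ((hFc.mono (Icc_subset_Icc_right ht.2)).add continuousOn_const) hF0
  have hcT : c ∈ Icc 0 T := ⟨hc.1, hc.2.trans ht.2⟩
  -- after the last exit time `c` from `{F ≥ -K ε}`, the penalization grows at rate `≥ K`
  have hint : (t - c) * (K * ε) ≤ ∫ s in c..t, max (-F s) 0 := by
    have := integral_mono_on_of_le_Ioo (f := fun _ => (K : ℝ) * ε) hc.2 intervalIntegrable_const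
      (intervalIntegrable_max_neg_zero hFc hcT ht)
      fun u hu => le_max_of_le_left (by linarith [hlt u (Ioo_subset_Ioc_self hu)])
    simpa only [integral_const, smul_eq_mul] using this
  have hψ : K * (t - c) ≤ penalization ε F t - penalization ε F c := by
    rw [penalization_sub_penalization hFc hcT ht]
    calc (K : ℝ) * (t - c) = ε⁻¹ * ((t - c) * (K * ε)) := by field_simp
      _ ≤ _ := by gcongr
  have hyc : y c ≤ y t + K * (t - c) := by
    simpa [Real.dist_eq, abs_of_nonpos (sub_nonpos.2 hc.2)] using hy.le_add_mul hcT ht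
  linarith [hF t ht, hF c hcT]

theorem penalization_le_skorohodRegulator (hε : 0 < ε) (hy : LipschitzOnWith K y (Icc 0 T))
    (hFc : ContinuousOn F (Icc 0 T)) (hF : ∀ t ∈ Icc 0 T, F t = y t + penalization ε F t)
    {t : ℝ} (ht : t ∈ Icc 0 T) : penalization ε F t ≤ skorohodRegulator y t := by
  have h0 : (0 : ℝ) ∈ Icc 0 T := ⟨le_rfl, ht.1.trans ht.2⟩
  have hgap0 : 0 ≤ skorohodRegulator y 0 - penalization ε F 0 := by
    rw [penalization_zero, sub_zero]; exact skorohodRegulator_nonneg hy.continuousOn h0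
  obtain ⟨c, hc, hgapc, hlt⟩ :=
    ContinuousOn.exists_last_nonneg (h := fun u => skorohodRegulator y u - penalization ε F u) ht.1
    ((hy.skorohodRegulator.continuousOn.sub (continuousOn_penalization hFc)).mono
      (Icc_subset_Icc_right ht.2)) hgap0
  have hcT : c ∈ Icc 0 T := ⟨hc.1, hc.2.trans ht.2⟩
  -- after the last time `c` with `ψ ≤ φ`, `F = y + ψ > y + φ ≥ 0`, so the penalization is flat
  have hint : ∫ s in c..t, max (-F s) 0 ≤ ∫ s in c..t, (0 : ℝ) := by
    refine integral_mono_on_of_le_Ioo hc.2 (intervalIntegrable_max_neg_zero hFc hcT ht)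
      intervalIntegrable_const fun u hu => max_le ?_ le_rfl
    have huT : u ∈ Icc 0 T := ⟨hc.1.trans hu.1.le, hu.2.le.trans ht.2⟩
    linarith [hF u huT, hlt u (Ioo_subset_Ioc_self hu),
      add_skorohodRegulator_nonneg hy.continuousOn huT]
  have hψ : penalization ε F t - penalization ε F c ≤ 0 := by
    rw [penalization_sub_penalization hFc hcT ht]
    exact mul_nonpos_of_nonneg_of_nonpos (inv_nonneg.2 hε.le) (by simpa using hint)
  linarith [monotoneOn_skorohodRegulator hy.continuousOn hcT ht hc.2]

theorem skorohodRegulator_le_penalization_add (hε : 0 < ε) (hy : LipschitzOnWith K y (Icc 0 T))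
    (hy0 : 0 ≤ y 0) (hFc : ContinuousOn F (Icc 0 T))
    (hF : ∀ t ∈ Icc 0 T, F t = y t + penalization ε F t) {t : ℝ} (ht : t ∈ Icc 0 T) :
    skorohodRegulator y t ≤ penalization ε F t + K * ε := by
  refine skorohodRegulator_le ht.1 fun u hu => max_le ?_ ?_
  · have huT : u ∈ Icc 0 T := ⟨hu.1, hu.2.trans ht.2⟩
    linarith [hF u huT, neg_mul_le_of_penalized_s14 hε hy hy0 hFc hF huT,
      monotoneOn_penalization hε.le hFc huT ht hu.2]
  · have := monotoneOn_penalization hε.le hFc ⟨le_rfl, ht.1.trans ht.2⟩ ht ht.1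
    rw [penalization_zero] at this
    positivity

theorem dist_penalization_skorohodRegulator_le (hε : 0 < ε)
    (hy : LipschitzOnWith K y (Icc 0 T)) (hy0 : 0 ≤ y 0) (hFc : ContinuousOn F (Icc 0 T))
    (hF : ∀ t ∈ Icc 0 T, F t = y t + penalization ε F t) {t : ℝ} (ht : t ∈ Icc 0 T) :
    dist (penalization ε F t) (skorohodRegulator y t) ≤ K * ε := by
  have : 0 ≤ (K : ℝ) * ε := by positivity
  rw [Real.dist_eq, abs_le]
  constructor
  · linarith [skorohodRegulator_le_penalization_add hε hy hy0 hFc hF ht]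
  · linarith [penalization_le_skorohodRegulator hε hy hFc hF ht]

end PenalizedSolution

/-- Penalization approximation of the Skorohod problem for `g ∈ C¹([0,1])`, `g 0 = 0`,
`x ≥ 0`: along a subsequence `εₖ → 0⁺`, the penalized solutions `F εₖ` converge
uniformly on `[0,1]` to `f` and the penalization terms `εₖ⁻¹∫₀^· (F εₖ s)⁻ ds`
converge uniformly to `φ`, where `(f, φ)` solves the Skorohod equation:
`φ` is continuous, nondecreasing, `φ 0 = 0`, `f = x + φ + g ≥ 0` on `[0,1]`, and
`φ` is constant on intervals where `f > 0` (i.e. `∫₀¹ 1_{f>0} dφ = 0`). -/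
theorem penalized_ODE_to_skorohod (g g' : ℝ → ℝ) (x : ℝ)
    (hx : 0 ≤ x) (hg0 : g 0 = 0)
    (hg' : ∀ t ∈ Icc (0 : ℝ) 1, HasDerivWithinAt g (g' t) (Icc 0 1) t)
    (hg'c : ContinuousOn g' (Icc 0 1))
    (F : ℝ → ℝ → ℝ)
    (hFc : ∀ ε : ℝ, 0 < ε → ContinuousOn (F ε) (Icc 0 1))
    (hF : ∀ ε : ℝ, 0 < ε → ∀ t ∈ Icc (0 : ℝ) 1,
      F ε t = x + ε⁻¹ * (∫ s in (0 : ℝ)..t, max (-(F ε s)) 0) + g t) :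
    ∃ (εseq : ℕ → ℝ) (f φ : ℝ → ℝ),
      (∀ k, 0 < εseq k) ∧ Tendsto εseq atTop (nhds 0) ∧
      ContinuousOn φ (Icc 0 1) ∧ MonotoneOn φ (Icc 0 1) ∧ φ 0 = 0 ∧
      (∀ t ∈ Icc (0 : ℝ) 1, f t = x + φ t + g t ∧ 0 ≤ f t) ∧
      (∀ s ∈ Icc (0 : ℝ) 1, ∀ t ∈ Icc (0 : ℝ) 1, s ≤ t →
        (∀ u ∈ Icc s t, 0 < f u) → φ s = φ t) ∧
      TendstoUniformlyOn (fun k => F (εseq k)) f atTop (Icc 0 1) ∧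
      TendstoUniformlyOn
        (fun k t => (εseq k)⁻¹ * ∫ s in (0 : ℝ)..t, max (-(F (εseq k) s)) 0)
        φ atTop (Icc 0 1) := by
  set y : ℝ → ℝ := fun t => x + g t
  obtain ⟨K, hy⟩ : ∃ K, LipschitzOnWith K y (Icc 0 1) :=
    exists_lipschitzOnWith_of_hasDerivWithinAt (fun t ht => (hg' t ht).const_add x) hg'c
  have hy0 : 0 ≤ y 0 := by simpa [y, hg0] using hx
  have hFy : ∀ ε, 0 < ε → ∀ t ∈ Icc (0 : ℝ) 1, F ε t = y t + penalization ε (F ε) t :=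
    fun ε hε t ht => by rw [hF ε hε t ht, add_right_comm]; rfl
  have hdist : ∀ ε, 0 < ε → ∀ t ∈ Icc (0 : ℝ) 1,
      dist (penalization ε (F ε) t) (skorohodRegulator y t) ≤ K * ε := fun ε hε _ =>
    dist_penalization_skorohodRegulator_le hε hy hy0 (hFc ε hε) (hFy ε hε)
  have hεpos : ∀ k : ℕ, 0 < 1 / ((k : ℝ) + 1) := fun _ => Nat.one_div_pos_of_nat
  have hbound : Tendsto (fun k : ℕ => (K : ℝ) * (1 / ((k : ℝ) + 1))) atTop (𝓝 0) := by
    simpa using tendsto_one_div_add_atTop_nhds_zero_nat.const_mul (K : ℝ)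
  refine ⟨fun k => 1 / ((k : ℝ) + 1), fun t => y t + skorohodRegulator y t, skorohodRegulator y,
    hεpos, tendsto_one_div_add_atTop_nhds_zero_nat, hy.skorohodRegulator.continuousOn,
    monotoneOn_skorohodRegulator hy.continuousOn, skorohodRegulator_zero hy0,
    fun t ht => ⟨add_right_comm _ _ _, add_skorohodRegulator_nonneg hy.continuousOn ht⟩,
    fun s hs t ht hst => skorohodRegulator_eq_of_pos hy.continuousOn hs ht hst,
    tendstoUniformlyOn_of_dist_le hbound fun k t ht => ?_,
    tendstoUniformlyOn_of_dist_le hbound fun k => hdist _ (hεpos k)⟩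
  rw [hFy _ (hεpos k) t ht, dist_add_left]
  exact hdist _ (hεpos k) t ht
end
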